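/- Let X_u and X_v be i.i.d. uniform on {−1,+1}, and let Y be a random variable taking values in a finite set such that P(Y=y | X_u=s, X_v=t) depends only on the product s·t, i.e., P(Y=y | X_u=s, X_v=t) = q(y, s·t) for a probability mass function q(·, σ) for each σ ∈ {−1,+1}. Then I2(X_u; (X_v, Y)) = I2(X_u·X_v; Y). -/
import Mathlib


open Finset
open scoped Classical

noncomputable section

/-- Probability of an event under the probability mass function `p` on `Ω`. -/
def pr {Ω : Type*} [Fintype Ω] (p : Ω → ℝ) (E : Ω → Prop) : ℝ :=
  ∑ ω ∈ Finset.univ.filter (fun ω => E ω), p ω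

/-- Expectation of `f` under `p`. -/
def expec {Ω : Type*} [Fintype Ω] (p : Ω → ℝ) (f : Ω → ℝ) : ℝ :=
  ∑ ω, p ω * f ω

/-- The conditional expectation `E[U | A]`, as a random variable on `Ω`. -/
def condExp {Ω α : Type*} [Fintype Ω] (p : Ω → ℝ) (A : Ω → α) (U : Ω → ℝ) : Ω → ℝ :=
  fun ω => expec p (fun ω' => if A ω' = A ω then U ω' else 0) / pr p (fun ω' => A ω' = A ω)

/-- The variance of `f` under `p`. -/
def var {Ω : Type*} [Fintype Ω] (p : Ω → ℝ) (f : Ω → ℝ) : ℝ :=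
  expec p (fun ω => (f ω - expec p f)^2)

/-- The chi-squared mutual information `I2(A;B)`. -/
def I2 {Ω α β : Type*} [Fintype Ω] (p : Ω → ℝ) (A : Ω → α) (B : Ω → β) : ℝ :=
  ∑ a ∈ Finset.univ.image A, ∑ b ∈ Finset.univ.image B,
    if 0 < pr p (fun ω => A ω = a) * pr p (fun ω => B ω = b) then
      (pr p (fun ω => A ω = a ∧ B ω = b) - pr p (fun ω => A ω = a) * pr p (fun ω => B ω = b))^2
        / (pr p (fun ω => A ω = a) * pr p (fun ω => B ω = b))
    else 0

lemma pr_congr {Ω : Type*} [Fintype Ω] (p : Ω → ℝ) {E F : Ω → Prop}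
    (h : ∀ ω, E ω ↔ F ω) : pr p E = pr p F := by
  unfold pr; congr 1; apply Finset.filter_congr; intro ω _; simp only [h ω]

lemma pr_split {Ω α : Type*} [Fintype Ω] [Fintype α] (p : Ω → ℝ) (E : Ω → Prop) (A : Ω → α) :
    pr p E = ∑ a, pr p (fun ω => E ω ∧ A ω = a) := by
  unfold pr
  rw [← Finset.sum_fiberwise_of_maps_to (g := A) (fun ω _ => Finset.mem_univ (A ω)) p]
  apply Finset.sum_congr rfl; intro a _
  apply Finset.sum_congr _ (fun ω _ => rfl)
  rw [Finset.filter_filter]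
  ext ω; simp

lemma pr_split2 {Ω : Type*} [Fintype Ω] (p : Ω → ℝ) (E : Ω → Prop) (X : Ω → ℝ)
    (hX : ∀ ω, X ω = 1 ∨ X ω = -1) :
    pr p E = pr p (fun ω => E ω ∧ X ω = 1) + pr p (fun ω => E ω ∧ X ω = -1) := by
  unfold pr
  rw [← Finset.sum_filter_add_sum_filter_not (Finset.univ.filter (fun ω => E ω)) (fun ω => X ω = 1) p]
  congr 1
  · apply Finset.sum_congr _ (fun ω _ => rfl)
    rw [Finset.filter_filter]
    ext ω; simp
  · apply Finset.sum_congr _ (fun ω _ => rfl)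
    rw [Finset.filter_filter]
    ext ω
    rcases hX ω with h | h <;> simp [h] <;> norm_num

lemma pr_exists {Ω : Type*} [Fintype Ω] {p : Ω → ℝ} {E : Ω → Prop} (h : pr p E ≠ 0) :
    ∃ ω, E ω := by
  unfold pr at h
  obtain ⟨ω, hω, -⟩ := Finset.exists_ne_zero_of_sum_ne_zero h
  exact ⟨ω, (Finset.mem_filter.mp hω).2⟩

lemma pr_zero {Ω β : Type*} [Fintype Ω] (p : Ω → ℝ) (B : Ω → β) (b : β)
    (h : ∀ ω, B ω ≠ b) : pr p (fun ω => B ω = b) = 0 := by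
  unfold pr
  rw [Finset.filter_false_of_mem (fun ω _ => h ω), Finset.sum_empty]

/-- If `X_u`, `X_v` are i.i.d. uniform on `{-1,+1}` and `Y` is the output of
a channel `q` applied to `X_u·X_v`, then `I2(X_u; (X_v, Y)) = I2(X_u·X_v; Y)`. -/
theorem stmt8 {Ω γ : Type*} [Fintype Ω] [Fintype γ]
    (p : Ω → ℝ) (hp : ∀ ω, 0 ≤ p ω) (hps : ∑ ω, p ω = 1)
    (Xu Xv : Ω → ℝ) (Y : Ω → γ)
    (hXu : ∀ ω, Xu ω = 1 ∨ Xu ω = -1) (hXv : ∀ ω, Xv ω = 1 ∨ Xv ω = -1)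
    (q : γ → ℝ → ℝ)
    (hq0 : ∀ y s, (s = 1 ∨ s = -1) → 0 ≤ q y s)
    (hq1 : ∀ s, (s = 1 ∨ s = -1) → ∑ y, q y s = 1)
    (hjoint : ∀ s t : ℝ, (s = 1 ∨ s = -1) → (t = 1 ∨ t = -1) → ∀ y : γ,
      pr p (fun ω => Xu ω = s ∧ Xv ω = t ∧ Y ω = y) = 1/4 * q y (s * t)) :
    I2 p Xu (fun ω => (Xv ω, Y ω)) = I2 p (fun ω => Xu ω * Xv ω) Y := by
  have h1 : ((1:ℝ) = 1 ∨ (1:ℝ) = -1) := Or.inl rfl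
  have hm1 : ((-1:ℝ) = 1 ∨ (-1:ℝ) = -1) := Or.inr rfl
  -- joint of (Xu, Xv)
  have hAB : ∀ s t : ℝ, (s = 1 ∨ s = -1) → (t = 1 ∨ t = -1) →
      pr p (fun ω => Xu ω = s ∧ Xv ω = t) = 1/4 := by
    intro s t hs ht
    rw [pr_split p _ Y]
    have key : ∀ y, pr p (fun ω => (Xu ω = s ∧ Xv ω = t) ∧ Y ω = y) = 1/4 * q y (s*t) := by
      intro y
      rw [pr_congr p (fun ω => and_assoc)]
      exact hjoint s t hs ht y
    simp only [key]
    rw [← Finset.mul_sum, hq1 (s*t)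
      (by rcases hs with rfl|rfl <;> rcases ht with rfl|rfl <;> norm_num), mul_one]
  have hXuPr1 : pr p (fun ω => Xu ω = 1) = 1/2 := by
    rw [pr_split2 p _ Xv hXv, hAB 1 1 h1 h1, hAB 1 (-1) h1 hm1]; norm_num
  have hXuPrm1 : pr p (fun ω => Xu ω = -1) = 1/2 := by
    rw [pr_split2 p _ Xv hXv, hAB (-1) 1 hm1 h1, hAB (-1) (-1) hm1 hm1]; norm_num
  -- marginal of (Xv, Y)
  have hVY : ∀ (t : ℝ) (y : γ), (t = 1 ∨ t = -1) →
      pr p (fun ω => Xv ω = t ∧ Y ω = y) = 1/4 * (q y 1 + q y (-1)) := by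
    intro t y ht
    rw [pr_split2 p _ Xu hXu]
    have e1 : pr p (fun ω => (Xv ω = t ∧ Y ω = y) ∧ Xu ω = 1) = 1/4 * q y t := by
      rw [pr_congr p (F := fun ω => Xu ω = 1 ∧ Xv ω = t ∧ Y ω = y) (fun ω => by tauto),
        hjoint 1 t h1 ht y, one_mul]
    have e2 : pr p (fun ω => (Xv ω = t ∧ Y ω = y) ∧ Xu ω = -1) = 1/4 * q y (-t) := by
      rw [pr_congr p (F := fun ω => Xu ω = -1 ∧ Xv ω = t ∧ Y ω = y) (fun ω => by tauto),
        hjoint (-1) t hm1 ht y, neg_one_mul]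
    rw [e1, e2]
    rcases ht with rfl|rfl <;> norm_num <;> ring
  -- joint of (Xu·Xv, Y)
  have hPY : ∀ (σ : ℝ) (y : γ), (σ = 1 ∨ σ = -1) →
      pr p (fun ω => Xu ω * Xv ω = σ ∧ Y ω = y) = 1/2 * q y σ := by
    intro σ y hσ
    rw [pr_split2 p _ Xu hXu]
    have e1 : pr p (fun ω => (Xu ω * Xv ω = σ ∧ Y ω = y) ∧ Xu ω = 1)
        = pr p (fun ω => Xu ω = 1 ∧ Xv ω = σ ∧ Y ω = y) := by
      apply pr_congr
      intro ω
      constructor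
      · rintro ⟨⟨h1', hy⟩, hx⟩; rw [hx, one_mul] at h1'; exact ⟨hx, h1', hy⟩
      · rintro ⟨hx, hv, hy⟩; exact ⟨⟨by rw [hx, hv, one_mul], hy⟩, hx⟩
    have e2 : pr p (fun ω => (Xu ω * Xv ω = σ ∧ Y ω = y) ∧ Xu ω = -1)
        = pr p (fun ω => Xu ω = -1 ∧ Xv ω = -σ ∧ Y ω = y) := by
      apply pr_congr
      intro ω
      constructor
      · rintro ⟨⟨h1', hy⟩, hx⟩
        rw [hx, neg_one_mul, neg_eq_iff_eq_neg] at h1'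
        exact ⟨hx, h1', hy⟩
      · rintro ⟨hx, hv, hy⟩
        exact ⟨⟨by rw [hx, hv]; ring, hy⟩, hx⟩
    have hmσ : (-σ = 1 ∨ -σ = -1) := by rcases hσ with rfl|rfl <;> norm_num
    rw [e1, e2, hjoint 1 σ h1 hσ y, hjoint (-1) (-σ) hm1 hmσ y]
    rw [one_mul, show (-1:ℝ) * -σ = σ by ring]
    ring
  have hProd1 : pr p (fun ω => Xu ω * Xv ω = 1) = 1/2 := by
    rw [pr_split p _ Y]
    simp only [fun y => hPY 1 y h1]
    rw [← Finset.mul_sum, hq1 1 h1, mul_one]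
  have hProdm1 : pr p (fun ω => Xu ω * Xv ω = -1) = 1/2 := by
    rw [pr_split p _ Y]
    simp only [fun y => hPY (-1) y hm1]
    rw [← Finset.mul_sum, hq1 (-1) hm1, mul_one]
  have hXY : ∀ ω, Xu ω * Xv ω = 1 ∨ Xu ω * Xv ω = -1 := by
    intro ω
    rcases hXu ω with h|h <;> rcases hXv ω with h'|h' <;> rw [h, h'] <;> norm_num
  have hYpr : ∀ y, pr p (fun ω => Y ω = y) = 1/2 * (q y 1 + q y (-1)) := by
    intro y
    rw [pr_split2 p _ (fun ω => Xu ω * Xv ω) hXY,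
      pr_congr p (E := fun ω => Y ω = y ∧ Xu ω * Xv ω = 1)
        (F := fun ω => Xu ω * Xv ω = 1 ∧ Y ω = y) (fun ω => and_comm),
      pr_congr p (E := fun ω => Y ω = y ∧ Xu ω * Xv ω = -1)
        (F := fun ω => Xu ω * Xv ω = -1 ∧ Y ω = y) (fun ω => and_comm),
      hPY 1 y h1, hPY (-1) y hm1]
    ring
  -- images
  have hmemXu : ∀ s : ℝ, pr p (fun ω => Xu ω = s) = 1/2 → s ∈ Finset.univ.image Xu := by
    intro s hs
    obtain ⟨ω, hω⟩ := pr_exists (E := fun ω => Xu ω = s) (by rw [hs]; norm_num)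
    exact Finset.mem_image.mpr ⟨ω, Finset.mem_univ ω, hω⟩
  have himXu : Finset.univ.image Xu = ({1, -1} : Finset ℝ) := by
    apply Finset.Subset.antisymm
    · intro s hs
      obtain ⟨ω, -, rfl⟩ := Finset.mem_image.mp hs
      rcases hXu ω with h|h <;> simp [h]
    · intro s hs
      simp only [Finset.mem_insert, Finset.mem_singleton] at hs
      rcases hs with rfl|rfl
      · exact hmemXu 1 hXuPr1
      · exact hmemXu (-1) hXuPrm1
  have hmemP : ∀ s : ℝ, pr p (fun ω => Xu ω * Xv ω = s) = 1/2 →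
      s ∈ Finset.univ.image (fun ω => Xu ω * Xv ω) := by
    intro s hs
    obtain ⟨ω, hω⟩ := pr_exists (E := fun ω => Xu ω * Xv ω = s) (by rw [hs]; norm_num)
    exact Finset.mem_image.mpr ⟨ω, Finset.mem_univ ω, hω⟩
  have himP : Finset.univ.image (fun ω => Xu ω * Xv ω) = ({1, -1} : Finset ℝ) := by
    apply Finset.Subset.antisymm
    · intro s hs
      obtain ⟨ω, -, rfl⟩ := Finset.mem_image.mp hs
      rcases hXY ω with h|h <;> simp [h]
    · intro s hs
      simp only [Finset.mem_insert, Finset.mem_singleton] at hs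
      rcases hs with rfl|rfl
      · exact hmemP 1 hProd1
      · exact hmemP (-1) hProdm1
  -- instantiated pr values in the shapes appearing after unfolding I2
  have hB1 : ∀ y : γ, pr p (fun ω => (Xv ω, Y ω) = ((1:ℝ), y)) = 1/4 * (q y 1 + q y (-1)) := by
    intro y
    exact (pr_congr p (F := fun ω => Xv ω = 1 ∧ Y ω = y)
      (fun ω => by simp [Prod.ext_iff])).trans (hVY 1 y h1)
  have hBm1 : ∀ y : γ, pr p (fun ω => (Xv ω, Y ω) = ((-1:ℝ), y)) = 1/4 * (q y 1 + q y (-1)) := by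
    intro y
    exact (pr_congr p (F := fun ω => Xv ω = -1 ∧ Y ω = y)
      (fun ω => by simp [Prod.ext_iff])).trans (hVY (-1) y hm1)
  have hJ : ∀ (s t : ℝ), (s = 1 ∨ s = -1) → (t = 1 ∨ t = -1) → ∀ y : γ,
      pr p (fun ω => Xu ω = s ∧ (Xv ω, Y ω) = (t, y)) = 1/4 * q y (s * t) := by
    intro s t hs ht y
    exact (pr_congr p (F := fun ω => Xu ω = s ∧ Xv ω = t ∧ Y ω = y)
      (fun ω => by simp [Prod.ext_iff])).trans (hjoint s t hs ht y)
  have hJ11 : ∀ y : γ, pr p (fun ω => Xu ω = 1 ∧ (Xv ω, Y ω) = ((1:ℝ), y)) = 1/4 * q y 1 := by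
    intro y; rw [hJ 1 1 h1 h1 y]; norm_num
  have hJ1m1 : ∀ y : γ, pr p (fun ω => Xu ω = 1 ∧ (Xv ω, Y ω) = ((-1:ℝ), y)) = 1/4 * q y (-1) := by
    intro y; rw [hJ 1 (-1) h1 hm1 y]; norm_num
  have hJm11 : ∀ y : γ, pr p (fun ω => Xu ω = -1 ∧ (Xv ω, Y ω) = ((1:ℝ), y)) = 1/4 * q y (-1) := by
    intro y; rw [hJ (-1) 1 hm1 h1 y]; norm_num
  have hJm1m1 : ∀ y : γ, pr p (fun ω => Xu ω = -1 ∧ (Xv ω, Y ω) = ((-1:ℝ), y)) = 1/4 * q y 1 := by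
    intro y; rw [hJ (-1) (-1) hm1 hm1 y]; norm_num
  have hPY1 : ∀ y : γ, pr p (fun ω => Xu ω * Xv ω = 1 ∧ Y ω = y) = 1/2 * q y 1 :=
    fun y => hPY 1 y h1
  have hPYm1 : ∀ y : γ, pr p (fun ω => Xu ω * Xv ω = -1 ∧ Y ω = y) = 1/2 * q y (-1) :=
    fun y => hPY (-1) y hm1
  -- now unfold and compute
  simp only [I2]
  rw [himXu, himP]
  refine Eq.trans (Finset.sum_congr rfl fun a _ =>
      Finset.sum_subset (s₂ := ({1, -1} : Finset ℝ) ×ˢ (Finset.univ : Finset γ))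
        (fun b hb => ?_) (fun b _ hb => ?_))
    (Eq.trans ?_ (Finset.sum_congr rfl fun a _ =>
      (Finset.sum_subset (Finset.subset_univ _) (fun b _ hb => ?_)).symm))
  · simp only [Finset.mem_image] at hb
    obtain ⟨ω, -, rfl⟩ := hb
    rw [Finset.mem_product]
    refine ⟨?_, Finset.mem_univ _⟩
    rcases hXv ω with h|h <;> simp [h]
  · have hb' : ∀ ω, (Xv ω, Y ω) ≠ b := by
      intro ω h'
      exact hb (by simp only [Finset.mem_image]; exact ⟨ω, Finset.mem_univ ω, h'⟩)
    rw [pr_zero p (fun ω => (Xv ω, Y ω)) b hb']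
    simp
  · simp only [Finset.sum_product]
    have one_ne : (1:ℝ) ≠ -1 := by norm_num
    simp only [Finset.sum_pair one_ne]
    simp only [hXuPr1, hXuPrm1, hProd1, hProdm1, hB1, hBm1, hJ11, hJ1m1, hJm11, hJm1m1,
      hPY1, hPYm1, hYpr]
    simp only [← Finset.sum_add_distrib]
    apply Finset.sum_congr rfl
    intro y _
    have hq1y := hq0 y 1 h1
    have hqm1y := hq0 y (-1) hm1
    by_cases hS : q y 1 + q y (-1) = 0
    · simp [hS]
    · have hS' : 0 < q y 1 + q y (-1) :=
        lt_of_le_of_ne (by linarith) (Ne.symm hS)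
      have g1 : (0:ℝ) < 1/2 * (1/4 * (q y 1 + q y (-1))) := by linarith
      have g2 : (0:ℝ) < 1/2 * (1/2 * (q y 1 + q y (-1))) := by linarith
      simp only [if_pos g1, if_pos g2]
      field_simp
      ring
  · have hb' : ∀ ω, Y ω ≠ b := by
      intro ω h'
      exact hb (by simp only [Finset.mem_image]; exact ⟨ω, Finset.mem_univ ω, h'⟩)
    rw [pr_zero p Y b hb']
    simp

end
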